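/- Let v : ℝ → ℝ be weakly differentiable with v_x ∈ L²(ℝ), let K̃′ ∈ C_c^∞(ℝ), define K̃(x) = ∫_{−∞}^x K̃′(y) dy and A = ∫_ℝ K̃′(y) dy. Then ‖K̃′ ∗ v − A v‖_∞ ≤ ( ‖K̃‖_{L²((−∞,0))} + ‖K̃ − A‖_{L²((0,∞))} ) ‖v_x‖₂. -/

import Mathlib

open MeasureTheory Filter ENNReal

/-- The one-dimensional heat kernel `G(x,t) = (4πt)^{-1/2} exp(-x²/(4t))`. -/
noncomputable def heatKernel (t x : ℝ) : ℝ :=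
  (4 * Real.pi * t) ^ (-(1:ℝ)/2) * Real.exp (-(x ^ 2) / (4 * t))

/-- The spatial derivative `∂ₓG` of the heat kernel. -/
noncomputable def heatKernelDx (t x : ℝ) : ℝ :=
  -(x / (2 * t)) * heatKernel t x

/-- Convolution in the space variable. -/
noncomputable def conv (f g : ℝ → ℝ) (x : ℝ) : ℝ :=
  ∫ y, f (x - y) * g y

/-- `u` is a global-in-time mild solution of `u_t = u_xx - (u (K' * u))_x`, `u(·,0) = u₀`,
i.e. it satisfies the Duhamel formula
`u(t) = G(t) * u₀ - ∫₀ᵗ ∂ₓG(t-s) * (u(s) (K' * u(s))) ds` for every `t > 0`. -/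
def IsMildSolution (K' u₀ : ℝ → ℝ) (u : ℝ → ℝ → ℝ) : Prop :=
  (∀ x, u x 0 = u₀ x) ∧
  ∀ t : ℝ, 0 < t → ∀ x : ℝ,
    u x t = conv (heatKernel t) u₀ x
      - ∫ s in Set.Ioo 0 t,
          conv (heatKernelDx (t - s)) (fun y => u y s * conv K' (fun z => u z s) y) x

/-- Continuity of `t ↦ u(·,t)` on the time set `S` as an `L^p(ℝ)`-valued function. -/
def ContinuousLp (p : ℝ≥0∞) (u : ℝ → ℝ → ℝ) (S : Set ℝ) : Prop :=
  ∀ t ∈ S, Filter.Tendsto (fun s => eLpNorm (fun x => u x s - u x t) p volume)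
    (nhdsWithin t S) (nhds 0)


private lemma integrable_mul_of_memL2 {f g : ℝ → ℝ} (hf : MemLp f 2 volume)
    (hg : MemLp g 2 volume) : Integrable (fun y => f y * g y) volume := by
  refine ((hf.integrable_sq.add hg.integrable_sq).const_mul (1/2 : ℝ)).mono'
    (hf.aestronglyMeasurable.mul hg.aestronglyMeasurable) (Filter.Eventually.of_forall fun y => ?_)
  simp only [Pi.add_apply]
  rw [Real.norm_eq_abs, abs_mul]
  nlinarith [sq_nonneg (|f y| - |g y|), sq_abs (f y), sq_abs (g y), abs_nonneg (f y),
    abs_nonneg (g y)]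

private lemma enorm_integral_mul_le_L2 {f g : ℝ → ℝ} (hf : AEStronglyMeasurable f volume)
    (hg : AEStronglyMeasurable g volume) :
    (‖∫ y, f y * g y‖₊ : ℝ≥0∞) ≤ eLpNorm f 2 volume * eLpNorm g 2 volume := by
  have h1 : (‖∫ y, f y * g y‖₊ : ℝ≥0∞) ≤ ∫⁻ y, ‖f y * g y‖₊ :=
    enorm_integral_le_lintegral_enorm _
  have h2 : ∫⁻ y, (‖f y * g y‖₊ : ℝ≥0∞) =
      ∫⁻ y, ((fun y => (‖f y‖₊ : ℝ≥0∞)) * fun y => (‖g y‖₊ : ℝ≥0∞)) y := by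
    simp [nnnorm_mul, ENNReal.coe_mul]
  have h3 := lintegral_mul_le_Lp_mul_Lq volume (p := 2) (q := 2)
    ⟨by norm_num, by norm_num, by norm_num⟩ hf.enorm hg.enorm
  rw [eLpNorm_eq_lintegral_rpow_enorm_toReal two_ne_zero ENNReal.ofNat_ne_top,
    eLpNorm_eq_lintegral_rpow_enorm_toReal two_ne_zero ENNReal.ofNat_ne_top]
  simp only [ENNReal.toReal_ofNat] at *
  exact h1.trans (h2.le.trans h3)

/-- Lemma on approximation of the identity.
Let `v` be differentiable with `v' ∈ L²(ℝ)`, let `K̃' ∈ C_c^∞(ℝ)`, put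
`K̃(x) = ∫_{-∞}^x K̃'(y) dy` and `A = ∫ K̃'`. Then
`‖K̃' * v - A v‖_∞ ≤ (‖K̃‖_{L²((-∞,0))} + ‖K̃ - A‖_{L²((0,∞))}) ‖v'‖₂`. -/
theorem approximate_identity_estimate
    (v v' : ℝ → ℝ) (hv : ∀ x, HasDerivAt v (v' x) x) (hv' : MemLp v' 2 volume)
    (Kt' : ℝ → ℝ) (hKt'smooth : ContDiff ℝ (⊤ : ℕ∞) Kt') (hKt'supp : HasCompactSupport Kt') :
    eLpNorm (fun x => conv Kt' v x - (∫ y, Kt' y) * v x) ⊤ volume ≤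
      (eLpNorm (fun x => ∫ y in Set.Iic x, Kt' y) 2 (volume.restrict (Set.Iio 0)) +
        eLpNorm (fun x => (∫ y in Set.Iic x, Kt' y) - ∫ y, Kt' y) 2
          (volume.restrict (Set.Ioi 0))) *
      eLpNorm v' 2 volume := by
  
  set A := ∫ y, Kt' y with hA
  set Kt : ℝ → ℝ := fun x => ∫ y in Set.Iic x, Kt' y with hKtdef
  have contKt' : Continuous Kt' := hKt'smooth.continuous
  have hKt'int : Integrable Kt' volume := contKt'.integrable_of_hasCompactSupport hKt'supp
  obtain ⟨R, hRsupp⟩ := hKt'supp.isCompact.isBounded.subset_closedBall 0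
  have hKt'zero : ∀ y : ℝ, R < |y| → Kt' y = 0 := by
    intro y hy
    apply image_eq_zero_of_notMem_tsupport
    intro hmem
    have := hRsupp hmem
    rw [Metric.mem_closedBall, Real.dist_eq, sub_zero] at this
    linarith
  have hKtrep : ∀ u : ℝ, Kt u = Kt 0 + ∫ t in (0:ℝ)..u, Kt' t := by
    intro u
    have h := intervalIntegral.integral_Iic_sub_Iic (hKt'int.integrableOn) (hKt'int.integrableOn)
      (a := (0:ℝ)) (b := u) (μ := volume)
    simp only [hKtdef]
    linarith [h]
  have hKtderiv : ∀ y : ℝ, HasDerivAt Kt (Kt' y) y := by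
    intro y
    have h : HasDerivAt (fun u => Kt 0 + ∫ t in (0:ℝ)..u, Kt' t) (Kt' y) y :=
      (intervalIntegral.integral_hasDerivAt_right hKt'int.intervalIntegrable
        (contKt'.aestronglyMeasurable.stronglyMeasurableAtFilter)
        contKt'.continuousAt).const_add _
    exact h.congr_of_eventuallyEq (Filter.Eventually.of_forall fun u => hKtrep u)
  have hKtcont : Continuous Kt := continuous_iff_continuousAt.2 fun y => (hKtderiv y).continuousAt
  have hKt0 : ∀ y : ℝ, y < -R → Kt y = 0 := by
    intro y hy
    simp only [hKtdef]
    apply setIntegral_eq_zero_of_forall_eq_zero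
    intro z hz
    refine hKt'zero z ?_
    have hz' : z ≤ y := hz
    have : R < -z := by linarith
    exact lt_of_lt_of_le this (neg_le_abs z)
  have hKtA : ∀ y : ℝ, R < y → Kt y = A := by
    intro y hy
    have h2 : ∫ z in Set.Ioi y, Kt' z = 0 :=
      setIntegral_eq_zero_of_forall_eq_zero fun z hz =>
        hKt'zero z (lt_of_lt_of_le (lt_trans hy hz) (le_abs_self z))
    have h3 := intervalIntegral.integral_Iic_add_Ioi (b := y) (μ := volume)
      (hKt'int.integrableOn) (hKt'int.integrableOn)
    simp only [hKtdef, hA] at h3 ⊢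
    linarith [h3, h2]
  have hvcont : Continuous v := continuous_iff_continuousAt.2 fun y => (hv y).continuousAt
  set F₁ : ℝ → ℝ := (Set.Iio (0:ℝ)).indicator Kt with hF₁def
  set F₂ : ℝ → ℝ := (Set.Ioi (0:ℝ)).indicator (fun y => Kt y - A) with hF₂def
  have hF₁m : AEStronglyMeasurable F₁ volume :=
    hKtcont.aestronglyMeasurable.indicator measurableSet_Iio
  have hF₂m : AEStronglyMeasurable F₂ volume :=
    (hKtcont.sub continuous_const).aestronglyMeasurable.indicator measurableSet_Ioi
  obtain ⟨C₁, hC₁⟩ := (isCompact_Icc (a := -(R+1)) (b := (0:ℝ))).exists_bound_of_continuousOn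
    hKtcont.continuousOn
  obtain ⟨C₂, hC₂⟩ := (isCompact_Icc (a := (0:ℝ)) (b := R+1)).exists_bound_of_continuousOn
    (Continuous.continuousOn (hKtcont.sub (continuous_const (y := A))))
  have hF₁ : MemLp F₁ 2 volume := by
    refine HasCompactSupport.memLp_of_bound ?_ hF₁m (max C₁ 0)
      (Filter.Eventually.of_forall fun y => ?_)
    · apply HasCompactSupport.intro (isCompact_Icc (a := -(R+1)) (b := (0:ℝ)))
      intro y hy
      simp only [Set.mem_Icc, not_and_or, not_le] at hy
      rcases hy with hy | hy
      · by_cases h : y ∈ Set.Iio (0:ℝ)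
        · simp only [hF₁def, Set.indicator_of_mem h]
          exact hKt0 y (by linarith)
        · simp [hF₁def, Set.indicator_of_notMem h]
      · have : y ∉ Set.Iio (0:ℝ) := by simp only [Set.mem_Iio, not_lt]; linarith
        simp [hF₁def, Set.indicator_of_notMem this]
    · by_cases h : y ∈ Set.Iio (0:ℝ)
      · simp only [hF₁def, Set.indicator_of_mem h]
        by_cases h2 : -(R+1) ≤ y
        · exact le_trans (hC₁ y ⟨h2, le_of_lt h⟩) (le_max_left _ _)
        · rw [hKt0 y (by push_neg at h2; linarith)]
          simp
      · simp [hF₁def, Set.indicator_of_notMem h]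
  have hF₂ : MemLp F₂ 2 volume := by
    refine HasCompactSupport.memLp_of_bound ?_ hF₂m (max C₂ 0)
      (Filter.Eventually.of_forall fun y => ?_)
    · apply HasCompactSupport.intro (isCompact_Icc (a := (0:ℝ)) (b := R+1))
      intro y hy
      simp only [Set.mem_Icc, not_and_or, not_le] at hy
      rcases hy with hy | hy
      · have : y ∉ Set.Ioi (0:ℝ) := by simp only [Set.mem_Ioi, not_lt]; linarith
        simp [hF₂def, Set.indicator_of_notMem this]
      · by_cases h : y ∈ Set.Ioi (0:ℝ)
        · simp only [hF₂def, Set.indicator_of_mem h]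
          rw [hKtA y (by linarith)]
          ring
        · simp [hF₂def, Set.indicator_of_notMem h]
    · by_cases h : y ∈ Set.Ioi (0:ℝ)
      · simp only [hF₂def, Set.indicator_of_mem h]
        by_cases h2 : y ≤ R + 1
        · exact le_trans (hC₂ y ⟨le_of_lt h, h2⟩) (le_max_left _ _)
        · push_neg at h2
          rw [show Kt y - A = 0 by rw [hKtA y (by linarith)]; ring]
          simp
      · simp [hF₂def, Set.indicator_of_notMem h]
  have key : ∀ x : ℝ,
      conv Kt' v x - A * v x =
        (∫ y in Set.Iio (0:ℝ), Kt y * v' (x - y)) +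
          (∫ y in Set.Ioi (0:ℝ), (Kt y - A) * v' (x - y)) := by
    intro x
    have mp : MeasurePreserving (fun y : ℝ => x - y) volume volume :=
      Measure.measurePreserving_sub_left volume x
    have hg2 : MemLp (fun y => v' (x - y)) 2 volume := hv'.comp_measurePreserving mp
    have hw : Continuous (fun y : ℝ => v (x - y)) :=
      hvcont.comp (continuous_const.sub continuous_id)
    have hderiv_w : ∀ y : ℝ, HasDerivAt (fun y : ℝ => v (x - y)) (-(v' (x - y))) y := by
      intro y
      have h1 : HasDerivAt (fun z : ℝ => x - z) (-1) y := (hasDerivAt_id y).const_sub x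
      have := (hv (x - y)).comp y h1
      simpa [mul_comm, Function.comp_def] using this
    have hint1 : Integrable (fun y => Kt' y * v (x - y)) volume :=
      (contKt'.mul hw).integrable_of_hasCompactSupport hKt'supp.mul_right
    have hind₁ : (Set.Iio (0:ℝ)).indicator (fun y => Kt y * v' (x - y)) =
        fun y => F₁ y * v' (x - y) := by
      funext y
      by_cases h : y ∈ Set.Iio (0:ℝ) <;>
        simp [hF₁def, Set.indicator_of_mem, Set.indicator_of_notMem, h]
    have hind₂ : (Set.Ioi (0:ℝ)).indicator (fun y => (Kt y - A) * v' (x - y)) =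
        fun y => F₂ y * v' (x - y) := by
      funext y
      by_cases h : y ∈ Set.Ioi (0:ℝ) <;>
        simp [hF₂def, Set.indicator_of_mem, Set.indicator_of_notMem, h]
    have hint2 : Integrable (fun y => F₁ y * v' (x - y)) volume :=
      integrable_mul_of_memL2 hF₁ hg2
    have hint2' : IntegrableOn (fun y => Kt y * v' (x - y)) (Set.Iio 0) volume :=
      (integrable_indicator_iff measurableSet_Iio).mp (by rw [hind₁]; exact hint2)
    have hint2'' : IntegrableOn (fun y => Kt y * v' (x - y)) (Set.Iic 0) volume := by
      rw [IntegrableOn, ← restrict_Iio_eq_restrict_Iic]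
      exact hint2'
    have hint3 : Integrable (fun y => F₂ y * v' (x - y)) volume :=
      integrable_mul_of_memL2 hF₂ hg2
    have hint3' : IntegrableOn (fun y => (Kt y - A) * v' (x - y)) (Set.Ioi 0) volume :=
      (integrable_indicator_iff measurableSet_Ioi).mp (by rw [hind₂]; exact hint3)
    have hnegint2 : Integrable (fun y => Kt y * -(v' (x - y))) (volume.restrict (Set.Iic 0)) :=
      hint2''.neg.congr (Filter.Eventually.of_forall fun y => neg_mul_eq_mul_neg _ _)
    have hnegint3 : Integrable (fun y => (Kt y - A) * -(v' (x - y)))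
        (volume.restrict (Set.Ioi 0)) :=
      hint3'.neg.congr (Filter.Eventually.of_forall fun y => neg_mul_eq_mul_neg _ _)
    have ibpL : ∫ y in Set.Iic (0:ℝ),
        (Kt' y * v (x - y) + Kt y * -(v' (x - y))) = Kt 0 * v x := by
      have h := integral_Iic_of_hasDerivAt_of_tendsto
        (f := fun y => Kt y * v (x - y))
        (f' := fun y => Kt' y * v (x - y) + Kt y * -(v' (x - y))) (a := (0:ℝ)) (m := 0)
        (hKtcont.mul hw).continuousWithinAt
        (fun y _ => (hKtderiv y).mul (hderiv_w y))
        (hint1.integrableOn.add hnegint2)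
        ?_
      · simpa using h
      · refine Tendsto.congr' ?_ tendsto_const_nhds
        filter_upwards [eventually_le_atBot (-(R+1))] with y hy
        rw [hKt0 y (by linarith), zero_mul]
    have ibpR : ∫ y in Set.Ioi (0:ℝ),
        (Kt' y * v (x - y) + (Kt y - A) * -(v' (x - y))) = -((Kt 0 - A) * v x) := by
      have h := integral_Ioi_of_hasDerivAt_of_tendsto
        (f := fun y => (Kt y - A) * v (x - y))
        (f' := fun y => Kt' y * v (x - y) + (Kt y - A) * -(v' (x - y))) (a := (0:ℝ)) (m := 0)
        ((hKtcont.sub continuous_const).mul hw).continuousWithinAt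
        (fun y _ => (((hKtderiv y).sub_const A).mul (hderiv_w y)))
        (hint1.integrableOn.add hnegint3)
        ?_
      · simpa using h
      · refine Tendsto.congr' ?_ tendsto_const_nhds
        filter_upwards [eventually_ge_atTop (R+1)] with y hy
        rw [show Kt y - A = 0 by rw [hKtA y (by linarith)]; ring, zero_mul]
    have splitL : ∫ y in Set.Iic (0:ℝ), Kt' y * v (x - y) =
        Kt 0 * v x + ∫ y in Set.Iic (0:ℝ), Kt y * v' (x - y) := by
      rw [integral_add hint1.integrableOn hnegint2] at ibpL
      have hneg : ∫ y in Set.Iic (0:ℝ), Kt y * -(v' (x - y)) =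
          -∫ y in Set.Iic (0:ℝ), Kt y * v' (x - y) := by
        rw [← integral_neg]; congr 1; funext y; ring
      rw [hneg] at ibpL
      linarith [ibpL]
    have splitR : ∫ y in Set.Ioi (0:ℝ), Kt' y * v (x - y) =
        -((Kt 0 - A) * v x) + ∫ y in Set.Ioi (0:ℝ), (Kt y - A) * v' (x - y) := by
      rw [integral_add hint1.integrableOn hnegint3] at ibpR
      have hneg : ∫ y in Set.Ioi (0:ℝ), (Kt y - A) * -(v' (x - y)) =
          -∫ y in Set.Ioi (0:ℝ), (Kt y - A) * v' (x - y) := by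
        rw [← integral_neg]; congr 1; funext y; ring
      rw [hneg] at ibpR
      linarith [ibpR]
    have hconv : conv Kt' v x = ∫ y, Kt' y * v (x - y) := by
      have h := integral_sub_left_eq_self (fun y => Kt' y * v (x - y)) volume x
      simp only [_root_.sub_sub_cancel] at h
      exact h
    have hsplit : ∫ y, Kt' y * v (x - y) =
        (∫ y in Set.Iic (0:ℝ), Kt' y * v (x - y)) +
          ∫ y in Set.Ioi (0:ℝ), Kt' y * v (x - y) :=
      (intervalIntegral.integral_Iic_add_Ioi hint1.integrableOn hint1.integrableOn).symm
    have hIicIio : ∫ y in Set.Iic (0:ℝ), Kt y * v' (x - y) =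
        ∫ y in Set.Iio (0:ℝ), Kt y * v' (x - y) := integral_Iic_eq_integral_Iio
    rw [hconv, hsplit, splitL, splitR, hIicIio]
    ring
  rw [eLpNorm_exponent_top]
  have hnorm_g : ∀ x : ℝ, eLpNorm (fun y => v' (x - y)) 2 volume = eLpNorm v' 2 volume :=
    fun x => eLpNorm_comp_measurePreserving hv'.aestronglyMeasurable
      (Measure.measurePreserving_sub_left volume x)
  refine essSup_le_of_ae_le _ (Filter.Eventually.of_forall fun x => ?_)
  show (‖conv Kt' v x - A * v x‖₊ : ℝ≥0∞) ≤ _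
  rw [key x]
  have mp : MeasurePreserving (fun y : ℝ => x - y) volume volume :=
    Measure.measurePreserving_sub_left volume x
  have hgm : AEStronglyMeasurable (fun y => v' (x - y)) volume :=
    (hv'.comp_measurePreserving mp).aestronglyMeasurable
  have hind₁ : ∫ y in Set.Iio (0:ℝ), Kt y * v' (x - y) = ∫ y, F₁ y * v' (x - y) := by
    rw [← integral_indicator measurableSet_Iio]
    congr 1
    funext y
    by_cases h : y ∈ Set.Iio (0:ℝ) <;>
      simp [hF₁def, Set.indicator_of_mem, Set.indicator_of_notMem, h]
  have hind₂ : ∫ y in Set.Ioi (0:ℝ), (Kt y - A) * v' (x - y) = ∫ y, F₂ y * v' (x - y) := by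
    rw [← integral_indicator measurableSet_Ioi]
    congr 1
    funext y
    by_cases h : y ∈ Set.Ioi (0:ℝ) <;>
      simp [hF₂def, Set.indicator_of_mem, Set.indicator_of_notMem, h]
  calc (‖(∫ y in Set.Iio (0:ℝ), Kt y * v' (x - y)) +
          ∫ y in Set.Ioi (0:ℝ), (Kt y - A) * v' (x - y)‖₊ : ℝ≥0∞)
      ≤ (‖∫ y in Set.Iio (0:ℝ), Kt y * v' (x - y)‖₊ : ℝ≥0∞) +
          (‖∫ y in Set.Ioi (0:ℝ), (Kt y - A) * v' (x - y)‖₊ : ℝ≥0∞) := by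
        rw [← ENNReal.coe_add]
        exact ENNReal.coe_le_coe.2 (nnnorm_add_le _ _)
    _ ≤ eLpNorm F₁ 2 volume * eLpNorm (fun y => v' (x - y)) 2 volume +
          eLpNorm F₂ 2 volume * eLpNorm (fun y => v' (x - y)) 2 volume := by
        rw [hind₁, hind₂]
        exact add_le_add (enorm_integral_mul_le_L2 hF₁m hgm) (enorm_integral_mul_le_L2 hF₂m hgm)
    _ = (eLpNorm Kt 2 (volume.restrict (Set.Iio 0)) +
          eLpNorm (fun y => Kt y - A) 2 (volume.restrict (Set.Ioi 0))) *
            eLpNorm v' 2 volume := by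
        rw [hnorm_g x, hF₁def, hF₂def, eLpNorm_indicator_eq_eLpNorm_restrict measurableSet_Iio,
          eLpNorm_indicator_eq_eLpNorm_restrict measurableSet_Ioi, add_mul]
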